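/- arXiv:1001.1374 — 7 statements merged into one kernel-verified Lean document; each statement's English description precedes it below -/
import Mathlib

section
/- Let A, B, C be F-linear codes of length n over a finite field F such that for all a in A, b in B, c in C the coordinatewise product a*b is orthogonal to c. Then for every c in C, the Hamming weight of c is at least dim(c*A) + dim(c*B), where c*A denotes the linear space {c*a : a in A} (coordinatewise product). -/
noncomputable section

/-- Coordinatewise (Hadamard) multiplication by a fixed vector `c`, as a linear map. -/
def hadamard {F : Type*} [CommRing F] {n : ℕ} (c : Fin n → F) :
    (Fin n → F) →ₗ[F] (Fin n → F) where
  toFun a := fun i => c i * a i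
  map_add' a b := by funext i; simp [mul_add]
  map_smul' r a := by funext i; simp [smul_eq_mul]; ring

/-!
On the support `S` of `c`, the weighted dot product `⟪x, y⟫ = ∑_{i ∈ S} x i * y i / c i` is
nondegenerate, and `⟪c * a, c * b⟫ = ∑ a i * b i * c i = 0`. So `c * A` and `c * B`, both read
off on `S` without losing dimension, are orthogonal subspaces of `F^S`, whence
`dim (c * A) + dim (c * B) ≤ |S| = wt c`.
-/

open Module

theorem LinearMap.BilinForm.finrank_add_finrank_le_of_le_orthogonal {K V : Type*} [Field K]
    [AddCommGroup V] [Module K V] [FiniteDimensional K V] {B : LinearMap.BilinForm K V}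
    (hB : B.Nondegenerate) {U W : Submodule K V} (hUW : U ≤ B.orthogonal W) :
    finrank K U + finrank K W ≤ finrank K V := by
  have hU := Submodule.finrank_mono hUW
  rw [finrank_orthogonal hB] at hU
  have hW := Submodule.finrank_le W
  omega

theorem Matrix.nondegenerate_toBilin'_diagonal {K ι : Type*} [Field K] [Fintype ι]
    [DecidableEq ι] {w : ι → K} (hw : ∀ i, w i ≠ 0) :
    (Matrix.diagonal w).toBilin'.Nondegenerate :=
  LinearMap.BilinForm.nondegenerate_toBilin'_of_det_ne_zero' _ <| by
    simpa [Matrix.det_diagonal, Finset.prod_ne_zero_iff] using hw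

section

variable {F : Type*} [Field F] {n : ℕ}

def hadamardOnSupport (c : Fin n → F) : (Fin n → F) →ₗ[F] ({i // c i ≠ 0} → F) :=
  LinearMap.funLeft F F Subtype.val ∘ₗ hadamard c

theorem extendByZero_hadamardOnSupport (c x : Fin n → F) :
    Function.ExtendByZero.linearMap F Subtype.val (hadamardOnSupport c x) = hadamard c x := by
  funext i
  by_cases hci : c i = 0
  · rw [Function.ExtendByZero.linearMap_apply,
      Function.extend_apply' _ _ _ fun ⟨j, hj⟩ => j.2 (hj ▸ hci)]
    simp [hadamard, hci]
  · exact Subtype.val_injective.extend_apply _ _ ⟨i, hci⟩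

theorem finrank_map_hadamardOnSupport (c : Fin n → F) (P : Submodule F (Fin n → F)) :
    finrank F (P.map (hadamardOnSupport c)) = finrank F (P.map (hadamard c)) := by
  have hfactor : P.map (hadamard c) =
      (P.map (hadamardOnSupport c)).map (Function.ExtendByZero.linearMap F Subtype.val) := by
    rw [← Submodule.map_comp]
    congr 1
    exact (LinearMap.ext (extendByZero_hadamardOnSupport c)).symm
  rw [hfactor]
  exact (Submodule.equivMapOfInjective _
    (Function.extend_injective Subtype.val_injective (0 : Fin n → F)) _).finrank_eq

variable [DecidableEq F]

theorem toBilin'_diagonal_inv_hadamardOnSupport (c a b : Fin n → F) :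
    (Matrix.diagonal fun i : {i // c i ≠ 0} => (c i)⁻¹).toBilin'
      (hadamardOnSupport c a) (hadamardOnSupport c b) = ∑ i, a i * b i * c i := by
  have hoff : ∑ i : {i // ¬c i ≠ 0}, a i * b i * c i = 0 :=
    Finset.sum_eq_zero fun i _ => by rw [not_not.mp i.2, mul_zero]
  rw [Matrix.toBilin'_apply', ← Fintype.sum_subtype_add_sum_subtype (fun i => c i ≠ 0), hoff,
    add_zero]
  refine Finset.sum_congr rfl fun i _ => ?_
  simp only [Matrix.mulVec_diagonal, hadamardOnSupport, hadamard, LinearMap.coe_comp,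
    Function.comp_apply, LinearMap.funLeft_apply, LinearMap.coe_mk, AddHom.coe_mk]
  field_simp [i.2]

theorem map_hadamardOnSupport_le_orthogonal {A B C : Submodule F (Fin n → F)}
    (h : ∀ a ∈ A, ∀ b ∈ B, ∀ c ∈ C, ∑ i, a i * b i * c i = 0) {c : Fin n → F}
    (hc : c ∈ C) :
    B.map (hadamardOnSupport c) ≤
      (Matrix.diagonal fun i : {i // c i ≠ 0} => (c i)⁻¹).toBilin'.orthogonal
        (A.map (hadamardOnSupport c)) := by
  rintro _ ⟨b, hb, rfl⟩
  rw [LinearMap.BilinForm.mem_orthogonal_iff]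
  rintro _ ⟨a, ha, rfl⟩
  exact (toBilin'_diagonal_inv_hadamardOnSupport c a b).trans (h a ha b hb c hc)

end

theorem ab_bound_linear_codes_general {F : Type*} [Field F] [DecidableEq F] {n : ℕ}
    (A B C : Submodule F (Fin n → F))
    (h : ∀ a ∈ A, ∀ b ∈ B, ∀ c ∈ C, ∑ i, a i * b i * c i = 0) :
    ∀ c ∈ C,
      Module.finrank F (A.map (hadamard c)) + Module.finrank F (B.map (hadamard c))
        ≤ hammingNorm c := by
  intro c hc
  have hdim := LinearMap.BilinForm.finrank_add_finrank_le_of_le_orthogonal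
    (Matrix.nondegenerate_toBilin'_diagonal fun i => inv_ne_zero i.2)
    (map_hadamardOnSupport_le_orthogonal h hc)
  rwa [finrank_map_hadamardOnSupport, finrank_map_hadamardOnSupport, add_comm,
    finrank_fintype_fun_eq_card, Fintype.card_subtype] at hdim

/-- (AB bound, van Lint–Wilson) If `A`, `B`, `C` are linear codes of length `n` over a
finite field `F` such that `a * b ⊥ c` (coordinatewise product, standard bilinear form)
for all `a ∈ A`, `b ∈ B`, `c ∈ C`, then every `c ∈ C` satisfies
`wt(c) ≥ dim (c*A) + dim (c*B)`. -/
theorem ab_bound_linear_codes {F : Type*} [Field F] [Fintype F] [DecidableEq F] {n : ℕ}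
    (A B C : Submodule F (Fin n → F))
    (h : ∀ a ∈ A, ∀ b ∈ B, ∀ c ∈ C, ∑ i, a i * b i * c i = 0) :
    ∀ c ∈ C,
      Module.finrank F (A.map (hadamard c)) + Module.finrank F (B.map (hadamard c))
        ≤ hammingNorm c :=
  ab_bound_linear_codes_general A B C h
end
end

section
/- Let V be a finite-dimensional vector space over a field F, and let A, B be subspaces of F^n with A*B contained in the dual code of C. For c in C with support set S of size w, we have w >= dim(restriction of A to S under the diagonal map by c) + dim(restriction of B to S). (Equivalent AB-method inequality: wt(c) >= dim(c*A) + dim(c*B).) -/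
noncomputable section

open Module

lemma dot_bound {F : Type*} [Field F] {ι : Type*} [Fintype ι] [DecidableEq ι]
    (U W : Submodule F (ι → F))
    (horth : ∀ u ∈ U, ∀ w ∈ W, ∑ i, u i * w i = 0) :
    finrank F U + finrank F W ≤ Fintype.card ι := by
  classical
  set b := Pi.basisFun F ι with hb
  set e := b.toDualEquiv with he
  have hWU : W.map e.toLinearMap ≤ U.dualAnnihilator := by
    rintro _ ⟨w, hw, rfl⟩
    rw [Submodule.mem_dualAnnihilator]
    intro u hu
    have hcalc : e.toLinearMap w u = ∑ i, u i * w i := by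
      have hu' : u = ∑ i, u i • b i := by
        funext j
        simp [hb, Pi.basisFun_apply, Pi.single_apply]
      calc e.toLinearMap w u = b.toDual w u := rfl
        _ = b.toDual w (∑ i, u i • b i) := by rw [← hu']
        _ = ∑ i, u i * b.toDual w (b i) := by
            rw [map_sum]; simp only [map_smul, smul_eq_mul]
        _ = ∑ i, u i * w i := by
            simp only [Basis.toDual_apply_left, hb, Pi.basisFun_repr]
    rw [hcalc]
    exact horth u hu w hw
  have h1 : finrank F (W.map e.toLinearMap) = finrank F W :=
    (Submodule.equivMapOfInjective _ e.injective W).symm.finrank_eq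
  have h3 : finrank F (W.map e.toLinearMap) ≤ finrank F U.dualAnnihilator :=
    Submodule.finrank_mono hWU
  have h2 : finrank F U.dualAnnihilator + finrank F U = finrank F (ι → F) := by
    rw [← (Subspace.quotEquivAnnihilator U).finrank_eq, Submodule.finrank_quotient_add_finrank]
  have h4 : finrank F (ι → F) = Fintype.card ι := by simp
  omega

/-- (AB method inequality) Let `A`, `B` be subspaces of `F^n` with `A*B` contained in the
dual code of `C` (i.e. the Hadamard product of any word of `A` with any word of `B` is
orthogonal to every word of `C`).  For `c ∈ C` with support set `S` of size `w`, we have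
`w ≥ dim (c*A) + dim (c*B)`, where `c*A = {c*a : a ∈ A}`. -/
theorem ab_bound_support {F : Type*} [Field F] [DecidableEq F] {n : ℕ}
    (A B C : Submodule F (Fin n → F))
    (h : ∀ a ∈ A, ∀ b ∈ B, ∀ c ∈ C, ∑ i, a i * b i * c i = 0) :
    ∀ c ∈ C, ∀ (S : Finset (Fin n)) (w : ℕ),
      S = Finset.univ.filter (fun i => c i ≠ 0) → w = S.card →
      Module.finrank F (A.map (hadamard c)) + Module.finrank F (B.map (hadamard c)) ≤ w := by
  intro c hc S w hS hw
  classical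
  -- c vanishes off S
  have hcS : ∀ i, i ∉ S → c i = 0 := by
    intro i hi
    by_contra hne
    exact hi (hS ▸ Finset.mem_filter.mpr ⟨Finset.mem_univ i, hne⟩)
  -- restriction map to coordinates in S
  let r : (Fin n → F) →ₗ[F] ({x // x ∈ S} → F) :=
    LinearMap.funLeft F F (Subtype.val)
  -- extension by zero
  let s : ({x // x ∈ S} → F) →ₗ[F] (Fin n → F) :=
    { toFun := fun x i => if hi : i ∈ S then x ⟨i, hi⟩ else 0
      map_add' := by intro x y; funext i; by_cases hi : i ∈ S <;> simp [hi]
      map_smul' := by intro m x; funext i; by_cases hi : i ∈ S <;> simp [hi] }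
  -- any submodule of vectors supported on S has the same finrank as its restriction
  have key : ∀ P : Submodule F (Fin n → F), (∀ x ∈ P, ∀ i, i ∉ S → x i = 0) →
      Module.finrank F P ≤ Module.finrank F (P.map r) := by
    intro P hP
    have hle : P ≤ (P.map r).map s := by
      intro x hx
      refine ⟨r x, ⟨x, hx, rfl⟩, ?_⟩
      funext i
      by_cases hi : i ∈ S
      · simp [s, hi, r, LinearMap.funLeft]
      · simp [s, hi, hP x hx i hi]
    calc Module.finrank F P ≤ Module.finrank F ((P.map r).map s) :=
          Submodule.finrank_mono hle
      _ ≤ Module.finrank F (P.map r) := Submodule.finrank_map_le s (P.map r)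
  -- supported-on-S facts
  have hsuppA : ∀ x ∈ A.map (hadamard c), ∀ i, i ∉ S → x i = 0 := by
    rintro _ ⟨a, _, rfl⟩ i hi
    simp [hadamard, hcS i hi]
  have hsuppB : ∀ x ∈ B.map (hadamard c), ∀ i, i ∉ S → x i = 0 := by
    rintro _ ⟨b, _, rfl⟩ i hi
    simp [hadamard, hcS i hi]
  -- the two restricted subspaces
  set U := (A.map (hadamard c)).map r with hU
  set W := B.map r with hWdef
  -- multiplication by c on restricted coordinates
  let m : ({x // x ∈ S} → F) →ₗ[F] ({x // x ∈ S} → F) :=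
    { toFun := fun x i => c i * x i
      map_add' := by intro x y; funext i; simp [mul_add]
      map_smul' := by intro t x; funext i; simp [smul_eq_mul]; ring }
  have hcomm : r ∘ₗ hadamard c = m ∘ₗ r := by
    apply LinearMap.ext; intro x; funext i; rfl
  -- c*B restricted equals m(W), so its dim ≤ dim W
  have hBres : (B.map (hadamard c)).map r = W.map m := by
    rw [hWdef, ← Submodule.map_comp, ← Submodule.map_comp, hcomm]
  -- dimension comparisons
  have hA1 : Module.finrank F (A.map (hadamard c)) ≤ Module.finrank F U :=
    key _ hsuppA
  have hB1 : Module.finrank F (B.map (hadamard c)) ≤ Module.finrank F W := by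
    calc Module.finrank F (B.map (hadamard c))
        ≤ Module.finrank F ((B.map (hadamard c)).map r) := key _ hsuppB
      _ = Module.finrank F (W.map m) := by rw [hBres]
      _ ≤ Module.finrank F W := Submodule.finrank_map_le m W
  -- orthogonality between U and W
  have horth : ∀ u ∈ U, ∀ x ∈ W, ∑ i, u i * x i = 0 := by
    rintro _ ⟨_, ⟨a, ha, rfl⟩, rfl⟩ _ ⟨b, hb, rfl⟩
    have := h a ha b hb c hc
    calc ∑ i : {x // x ∈ S}, r (hadamard c a) i * r b i
        = ∑ i ∈ S, (c i * a i) * b i := by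
          rw [← Finset.sum_attach S (fun i => (c i * a i) * b i)]
          rfl
      _ = ∑ i, a i * b i * c i := by
          rw [Finset.sum_subset (Finset.subset_univ S)]
          · exact Finset.sum_congr rfl (fun i _ => by ring)
          · intro i _ hi
            simp [hcS i hi]
      _ = 0 := this
  have hfin := dot_bound U W horth
  have hcard : Fintype.card {x // x ∈ S} = S.card := Fintype.card_coe S
  omega
end
end

section
/- Let X be a smooth projective absolutely irreducible curve over a field F with canonical divisor K. If there exist divisors A and B and a rational point P with G = A + B + P, L(A+P) = L(A), and L(B+P) = L(B), then for any divisor C with G linearly equivalent to K + C, one has L(C) = L(C-P). Conversely, if L(C) = L(C-P) and G ~ K + C, then such a decomposition G = A + B + P exists. -/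
noncomputable section

/-- Degree of a divisor, where divisors on the curve are modeled as finitely
supported integer valued functions on the set of rational points. -/
def degr {Point : Type*} (D : Point →₀ ℤ) : ℤ := D.sum fun _ n => n

/-- An abstract model of a smooth projective absolutely irreducible curve over a field,
recording the data used in the paper: the dimension `l D` of the Riemann-Roch space
`L(D)`, the genus `g`, a canonical divisor `K`, and linear equivalence `lin`,
together with their basic properties (Riemann-Roch, monotonicity, semigroup
properties of nongaps, etc.). -/
structure Curve (Point : Type*) where
  /-- `l D = dim L(D)` -/
  l : (Point →₀ ℤ) → ℕ
  /-- the genus -/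
  g : ℕ
  /-- a canonical divisor -/
  K : Point →₀ ℤ
  /-- linear equivalence of divisors -/
  lin : (Point →₀ ℤ) → (Point →₀ ℤ) → Prop
  lin_refl : ∀ A, lin A A
  lin_symm : ∀ {A B}, lin A B → lin B A
  lin_trans : ∀ {A B C}, lin A B → lin B C → lin A C
  lin_add : ∀ {A B} (E : Point →₀ ℤ), lin A B → lin (A + E) (B + E)
  deg_lin : ∀ {A B}, lin A B → degr A = degr B
  l_lin : ∀ {A B}, lin A B → l A = l B
  l_zero : l 0 = 1
  l_neg : ∀ {D}, degr D < 0 → l D = 0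
  l_mono : ∀ (D : Point →₀ ℤ) (P : Point), l D ≤ l (D + Finsupp.single P 1)
  l_step : ∀ (D : Point →₀ ℤ) (P : Point), l (D + Finsupp.single P 1) ≤ l D + 1
  /-- Riemann-Roch -/
  rr : ∀ D : Point →₀ ℤ, (l D : ℤ) - l (K - D) = degr D + 1 - g
  lin_of_deg_zero : ∀ {D}, l D ≠ 0 → degr D = 0 → lin D 0
  /-- the semigroup property of `Γ_P` -/
  gamma_add : ∀ (P : Point) {A B}, l A ≠ l (A - Finsupp.single P 1) →
      l B ≠ l (B - Finsupp.single P 1) → l (A + B) ≠ l (A + B - Finsupp.single P 1)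
  eff_add : ∀ {A B}, l A ≠ 0 → l B ≠ 0 → l (A + B) ≠ 0
  point_nongap : ∀ {P Q : Point}, P ≠ Q →
      l (Finsupp.single P 1) ≠ l (Finsupp.single P 1 - Finsupp.single Q 1)

variable {Point : Type*}

/-- `Γ_P` : divisor (classes) with no base point at `P`, i.e. `L(A) ≠ L(A-P)`. -/
def GammaP (X : Curve Point) (P : Point) : Set (Point →₀ ℤ) :=
  {A | X.l A ≠ X.l (A - Finsupp.single P 1)}

/-- `Γ_S = ∩_{P ∈ S} Γ_P`, with the convention `Γ_∅ = Γ = {A : L(A) ≠ 0}`. -/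
def GammaS (X : Curve Point) (S : Finset Point) : Set (Point →₀ ℤ) :=
  {A | (S = ∅ → X.l A ≠ 0) ∧ ∀ P ∈ S, A ∈ GammaP X P}

/-- `Γ(C; S, S') = {A : A ∈ Γ_S and A - C ∈ Γ_{S'}}`. -/
def GammaSet (X : Curve Point) (C : Point →₀ ℤ) (S S' : Finset Point) :
    Set (Point →₀ ℤ) :=
  {A | A ∈ GammaS X S ∧ A - C ∈ GammaS X S'}

/-- `γ(C; S, S') = min {deg A : A ∈ Γ(C; S, S')}`. -/
def gammaMin (X : Curve Point) (C : Point →₀ ℤ) (S S' : Finset Point) : ℤ :=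
  sInf (degr '' GammaSet X C S S')

/-- `Δ = {i : A_i ∈ Γ_{P_i} and A_i - C ∉ Γ_{P_i}}` for indices `1 ≤ i ≤ n`. -/
def Delta (X : Curve Point) (C : Point →₀ ℤ) (n : ℕ) (A : ℕ → Point →₀ ℤ)
    (P : ℕ → Point) : Set ℕ :=
  {i | 1 ≤ i ∧ i ≤ n ∧ A i ∈ GammaP X (P i) ∧ A i - C ∉ GammaP X (P i)}

/-- `Δ' = {i : A_i ∉ Γ_{P_i} and A_i - C ∈ Γ_{P_i}}` for indices `1 ≤ i ≤ n`. -/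
def Delta' (X : Curve Point) (C : Point →₀ ℤ) (n : ℕ) (A : ℕ → Point →₀ ℤ)
    (P : ℕ → Point) : Set ℕ :=
  {i | 1 ≤ i ∧ i ≤ n ∧ A i ∉ GammaP X (P i) ∧ A i - C ∈ GammaP X (P i)}

lemma degr_add' (A B : Point →₀ ℤ) : degr (A + B) = degr A + degr B :=
  Finsupp.sum_add_index' (fun _ => rfl) (fun _ _ _ => rfl)

lemma degr_single' (P : Point) (n : ℤ) : degr (Finsupp.single P n) = n :=
  Finsupp.sum_single_index rfl

lemma degr_zero' : degr (0 : Point →₀ ℤ) = 0 := Finsupp.sum_zero_index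

lemma degr_neg' (A : Point →₀ ℤ) : degr (-A) = -degr A := by
  have := degr_add' (-A) A
  simp [degr_zero'] at this
  omega

lemma dual_lemma (X : Curve Point) (D : Point →₀ ℤ) (P : Point) :
    X.l (D + Finsupp.single P 1) = X.l D ↔
      X.l (X.K - D) ≠ X.l (X.K - D - Finsupp.single P 1) := by
  have h1 := X.rr (D + Finsupp.single P 1)
  have h2 := X.rr D
  have hm1 := X.l_mono D P
  have hs1 := X.l_step D P
  have hm2 := X.l_mono (X.K - D - Finsupp.single P 1) P
  have hs2 := X.l_step (X.K - D - Finsupp.single P 1) P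
  have e1 : X.K - (D + Finsupp.single P 1) = X.K - D - Finsupp.single P 1 := by abel
  have e2 : X.K - D - Finsupp.single P 1 + Finsupp.single P 1 = X.K - D := by abel
  have hdeg : degr (D + Finsupp.single P 1) = degr D + 1 := by
    rw [degr_add', degr_single']
  rw [e1, hdeg] at h1
  rw [e2] at hm2 hs2
  omega

/-- For a divisor `G` and a rational point `P`: there exist divisors `A` and `B` with
`G = A + B + P`, `L(A+P) = L(A)` and `L(B+P) = L(B)`, if and only if, for a divisor `C`
with `G ~ K + C`, one has `L(C) = L(C-P)`. -/
theorem base_point_decomposition (X : Curve Point) (G C : Point →₀ ℤ) (P : Point)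
    (hGC : X.lin G (X.K + C)) :
    (∃ A B : Point →₀ ℤ, G = A + B + Finsupp.single P 1 ∧
        X.l (A + Finsupp.single P 1) = X.l A ∧ X.l (B + Finsupp.single P 1) = X.l B)
      ↔ X.l C = X.l (C - Finsupp.single P 1) := by
  set p := Finsupp.single P (1 : ℤ) with hp
  constructor
  · rintro ⟨A, B, hG, hA, hB⟩
    -- translate hypotheses via the dual lemma
    have hA' : X.l (X.K - A) ≠ X.l (X.K - A - p) := (dual_lemma X A P).mp hA
    have hB' : X.l (X.K - B) ≠ X.l (X.K - B - p) := (dual_lemma X B P).mp hB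
    have hsum := X.gamma_add P hA' hB'
    -- (K-A)+(K-B) = 2K - G + p
    have hlin1 : X.lin (X.K - C) (X.K + X.K - G) := by
      have := X.lin_add (X.K - G - C) hGC
      have e : G + (X.K - G - C) = X.K - C := by abel
      have e' : X.K + C + (X.K - G - C) = X.K + X.K - G := by abel
      rw [e, e'] at this
      exact this
    have e3 : X.K - A + (X.K - B) = X.K + X.K - G + p := by
      rw [hG]; abel
    have e4 : X.K - A + (X.K - B) - p = X.K + X.K - G := by
      rw [hG]; abel
    rw [← hp] at hsum
    rw [e3] at hsum
    have e4' : X.K + X.K - G + p - p = X.K + X.K - G := by abel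
    rw [e4'] at hsum
    have hlin2 : X.lin (X.K - C + p) (X.K + X.K - G + p) := X.lin_add p hlin1
    have key : X.l (X.K - C + p) ≠ X.l (X.K - C) := by
      rw [X.l_lin hlin2, X.l_lin hlin1]
      exact hsum
    have := (dual_lemma X (C - p) P).mpr (by
      have e5 : X.K - (C - p) = X.K - C + p := by abel
      rw [e5, ← hp]
      have e6 : X.K - C + p - p = X.K - C := by abel
      rw [e6]; exact key)
    have e7 : C - p + p = C := by abel
    rw [e7] at this
    exact this
  · intro hC
    refine ⟨G - X.K - p, X.K, by abel, ?_, ?_⟩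
    · have hlin1 : X.lin (G - X.K - p + p) C := by
        have := X.lin_add (-X.K) hGC
        have e : G + -X.K = G - X.K - p + p := by abel
        have e' : X.K + C + -X.K = C := by abel
        rw [e, e'] at this
        exact this
      have hlin2 : X.lin (G - X.K - p) (C - p) := by
        have := X.lin_add (-X.K - p) hGC
        have e : G + (-X.K - p) = G - X.K - p := by abel
        have e' : X.K + C + (-X.K - p) = C - p := by abel
        rw [e, e'] at this
        exact this
      rw [X.l_lin hlin1, X.l_lin hlin2]
      exact hC
    · -- l(K+p) = l K = g
      have h0 := X.rr 0
      have hK := X.rr X.K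
      have hKp := X.rr (X.K + p)
      have e1 : X.K - (0 : Point →₀ ℤ) = X.K := by abel
      have e2 : X.K - X.K = (0 : Point →₀ ℤ) := by abel
      have e3 : X.K - (X.K + p) = -p := by abel
      have hnp : degr (-p) = -1 := by rw [degr_neg', degr_single']
      have hlneg : X.l (-p) = 0 := X.l_neg (by rw [hnp]; norm_num)
      have hdKp : degr (X.K + p) = degr X.K + 1 := by rw [degr_add', degr_single']
      rw [e1] at h0
      rw [e2] at hK
      rw [e3, hlneg, hdKp] at hKp
      rw [degr_zero'] at h0
      rw [X.l_zero] at h0 hK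
      omega
end
end

section
/- Let G be a divisor on a curve X and let η be a nonzero rational differential with divisor (η) = G - D' + E, where D', E >= 0 and E and D' have disjoint support. If G = A + B + Z with Z >= 0 and Z disjoint from D', then deg D' >= (l(A) - l(A - D')) + (l(B) - l(B - D')). -/
noncomputable section

variable {Point : Type*}

/-! Riemann–Roch applied to `A + E` and `A + E - D'` shows that the two drops
`l(A + E) - l(A + E - D')` and `l(B + Z) - l(B + Z - D')` add up to exactly `deg D'`, because
`K - (A + E) ~ B + Z - D'` and `K - (A + E - D') ~ B + Z`. It remains to see that the drop along
`D'` can only grow when an effective divisor `F` disjoint from `D'` is added. Removing the points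
of `D'` one at a time, this reduces to a single point `Q` with `F Q = 0`, where the drop is `0` or
`1`, and it is `1` exactly when `Q` is not a base point; that property survives adding `F` because
`Γ_Q` is a semigroup containing every point other than `Q`. -/

lemma degr_eq_degree (D : Point →₀ ℤ) : degr D = D.degree := rfl

lemma degr_sub (D D₂ : Point →₀ ℤ) : degr (D - D₂) = degr D - degr D₂ := by
  simp only [degr_eq_degree, map_sub]

lemma eq_zero_of_nonneg_of_degr_eq_zero {D : Point →₀ ℤ} (hD : 0 ≤ D) (h : degr D = 0) :
    D = 0 := by
  rw [degr_eq_degree, Finsupp.degree_apply,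
    Finset.sum_eq_zero_iff_of_nonneg fun P _ => hD P] at h
  ext P
  by_cases hP : P ∈ D.support
  · exact h P hP
  · exact Finsupp.notMem_support_iff.mp hP

lemma nonneg_sub_single {D : Point →₀ ℤ} (hD : 0 ≤ D) {Q : Point} (hQ : D Q ≠ 0) :
    0 ≤ D - Finsupp.single Q 1 := by
  intro P
  have : 0 ≤ D P := hD P
  by_cases hPQ : P = Q
  · subst hPQ
    rw [Finsupp.coe_zero, Pi.zero_apply, Finsupp.sub_apply, Finsupp.single_eq_same]
    omega
  · simpa [Finsupp.single_eq_of_ne hPQ] using this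

lemma le_add_single (D : Point →₀ ℤ) (Q : Point) : D ≤ D + Finsupp.single Q 1 :=
  le_add_of_nonneg_right (Finsupp.single_nonneg.mpr zero_le_one)

lemma nonneg_add_single {D : Point →₀ ℤ} (hD : 0 ≤ D) (Q : Point) :
    0 ≤ D + Finsupp.single Q 1 :=
  hD.trans (le_add_single D Q)

lemma add_single_apply_self (D : Point →₀ ℤ) (Q : Point) :
    (D + Finsupp.single Q 1 : Point →₀ ℤ) Q = D Q + 1 := by
  rw [Finsupp.add_apply, Finsupp.single_eq_same]

theorem nonneg_induction {motive : (D : Point →₀ ℤ) → 0 ≤ D → Prop} (zero : motive 0 le_rfl)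
    (add_single : ∀ D Q (hD : 0 ≤ D), motive D hD →
      motive (D + Finsupp.single Q 1) (nonneg_add_single hD Q))
    {D : Point →₀ ℤ} (hD : 0 ≤ D) : motive D hD := by
  suffices ∀ n : ℕ, ∀ D : Point →₀ ℤ, (hD : 0 ≤ D) → degr D = n → motive D hD from
    this _ D hD (Int.toNat_of_nonneg (Finset.sum_nonneg fun P _ => hD P)).symm
  intro n
  induction n with
  | zero =>
    intro D hD hdeg
    obtain rfl := eq_zero_of_nonneg_of_degr_eq_zero hD (by exact_mod_cast hdeg)
    exact zero
  | succ n ih =>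
    intro D hD hdeg
    obtain ⟨Q, hQ⟩ : ∃ Q, D Q ≠ 0 := by
      by_contra! h
      simp only [show D = 0 from Finsupp.ext h, degr_eq_degree, map_zero] at hdeg
      omega
    have hdeg' : degr (D - Finsupp.single Q 1) = n := by
      rw [degr_sub, hdeg, degr_eq_degree (Finsupp.single Q 1), Finsupp.degree_single]
      push_cast
      ring
    have h := add_single _ Q _ (ih _ (nonneg_sub_single hD hQ) hdeg')
    simp only [sub_add_cancel] at h
    exact h

namespace Curve

variable (X : Curve Point)

lemma l_sub_single_le (A : Point →₀ ℤ) (Q : Point) : X.l (A - Finsupp.single Q 1) ≤ X.l A := by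
  have h := X.l_mono (A - Finsupp.single Q 1) Q
  rwa [sub_add_cancel] at h

lemma l_le_l_sub_single_add_one (A : Point →₀ ℤ) (Q : Point) :
    X.l A ≤ X.l (A - Finsupp.single Q 1) + 1 := by
  have h := X.l_step (A - Finsupp.single Q 1) Q
  rwa [sub_add_cancel] at h

lemma add_mem_gammaP_of_nonneg {P : Point} {A F : Point →₀ ℤ} (hA : A ∈ GammaP X P)
    (hF : 0 ≤ F) (hFP : F P = 0) : A + F ∈ GammaP X P := by
  induction hF using nonneg_induction with
  | zero => simpa using hA
  | add_single F Q hF ih =>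
    have hQP : Q ≠ P := by
      rintro rfl
      have : 0 ≤ F Q := hF Q
      rw [add_single_apply_self] at hFP
      omega
    have hFP' : F P = 0 := le_antisymm (hFP ▸ le_add_single F Q P) (hF P)
    rw [← add_assoc]
    exact X.gamma_add P (ih hFP') (X.point_nongap hQP)

lemma drop_single_le_drop_add {Q : Point} {F : Point →₀ ℤ} (hF : 0 ≤ F) (hFQ : F Q = 0)
    (A : Point →₀ ℤ) :
    (X.l A : ℤ) - X.l (A - Finsupp.single Q 1) ≤
      (X.l (A + F) : ℤ) - X.l (A + F - Finsupp.single Q 1) := by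
  have hA := X.l_le_l_sub_single_add_one A Q
  have hAF₁ := X.l_sub_single_le (A + F) Q
  have hAF₂ := X.l_le_l_sub_single_add_one (A + F) Q
  by_cases hAQ : A ∈ GammaP X Q
  · have hAFQ : A + F ∈ GammaP X Q := X.add_mem_gammaP_of_nonneg hAQ hF hFQ
    simp only [GammaP, Set.mem_ofPred_eq] at hAQ hAFQ
    omega
  · simp only [GammaP, Set.mem_ofPred_eq, not_not] at hAQ
    omega

theorem drop_le_drop_add {D F : Point →₀ ℤ} (hD : 0 ≤ D) (hF : 0 ≤ F)
    (hFD : Disjoint F.support D.support) (A : Point →₀ ℤ) :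
    (X.l A : ℤ) - X.l (A - D) ≤ (X.l (A + F) : ℤ) - X.l (A + F - D) := by
  induction hD using nonneg_induction generalizing A with
  | zero => simp
  | add_single D Q hD ih =>
    have hsupp (P : Point) (hP : D P ≠ 0) : (D + Finsupp.single Q 1 : Point →₀ ℤ) P ≠ 0 :=
      ((lt_of_le_of_ne (hD P) hP.symm).trans_le (le_add_single D Q P)).ne'
    have hQ : (D + Finsupp.single Q 1 : Point →₀ ℤ) Q ≠ 0 := by
      have : 0 ≤ D Q := hD Q
      rw [add_single_apply_self]
      omega
    have hFQ : F Q = 0 := Finsupp.notMem_support_iff.mp fun h =>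
      Finset.disjoint_left.mp hFD h (Finsupp.mem_support_iff.mpr hQ)
    have hFD' : Disjoint F.support D.support := Finset.disjoint_left.mpr fun P hPF hPD =>
      Finset.disjoint_left.mp hFD hPF
        (Finsupp.mem_support_iff.mpr (hsupp P (Finsupp.mem_support_iff.mp hPD)))
    have hrest := ih hFD' (A - Finsupp.single Q 1)
    have hfirst := X.drop_single_le_drop_add hF hFQ A
    rw [sub_add_eq_add_sub] at hrest
    rw [add_comm D, ← sub_sub, ← sub_sub]
    linarith

lemma lin_sub {A B : Point →₀ ℤ} (h : X.lin A B) (C : Point →₀ ℤ) : X.lin (A - C) (B - C) := by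
  simpa only [sub_eq_add_neg] using X.lin_add (-C) h

theorem drop_add_drop_eq_degr {A B D : Point →₀ ℤ} (hK : X.lin X.K (A + B - D)) :
    ((X.l A : ℤ) - X.l (A - D)) + ((X.l B : ℤ) - X.l (B - D)) = degr D := by
  have hA : X.l (X.K - A) = X.l (B - D) := by
    rw [X.l_lin (X.lin_sub hK A)]
    congr 1
    abel
  have hAD : X.l (X.K - (A - D)) = X.l B := by
    rw [X.l_lin (X.lin_sub hK (A - D))]
    congr 1
    abel
  have rrA := X.rr A
  have rrAD := X.rr (A - D)
  rw [hA] at rrA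
  rw [hAD, degr_sub] at rrAD
  linarith

end Curve

/-- (Key lemma for the ABZ bound) Let `G` be a divisor and let `η` be a nonzero rational
differential with divisor `(η) = G - D' + E` (so `K ~ G - D' + E`), where `D', E ≥ 0` and
`E`, `D'` have disjoint supports.  If `G = A + B + Z` with `Z ≥ 0` and `Z` disjoint from
`D'`, then `deg D' ≥ (l(A) - l(A - D')) + (l(B) - l(B - D'))`. -/
theorem abz_lemma (X : Curve Point) (G D' E A B Z : Point →₀ ℤ)
    (hK : X.lin X.K (G - D' + E))
    (hD' : 0 ≤ D') (hE : 0 ≤ E) (hED' : Disjoint E.support D'.support)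
    (hG : G = A + B + Z) (hZ : 0 ≤ Z) (hZD' : Disjoint Z.support D'.support) :
    ((X.l A : ℤ) - X.l (A - D')) + ((X.l B : ℤ) - X.l (B - D')) ≤ degr D' := by
  have hK' : X.lin X.K ((A + E) + (B + Z) - D') := by
    convert hK using 1
    rw [hG]
    abel
  have hA := X.drop_le_drop_add hD' hE hED' A
  have hB := X.drop_le_drop_add hD' hZ hZD' B
  linarith [X.drop_add_drop_eq_degr hK']
end
end

section
/- For a curve X over a field, a rational point P, and Γ_P = {divisor classes A : L(A) ≠ L(A-P)}, the set Γ_P is a semigroup: if A, B ∈ Γ_P then A + B ∈ Γ_P. -/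
noncomputable section

/-- The Riemann–Roch space `L(A)` of a divisor `A` on a curve, described concretely
inside the function field `K` via the order-of-vanishing functions `v P` at the rational
points `P`: `L(A) = {f ≠ 0 : ∀ P, v_P(f) + A(P) ≥ 0} ∪ {0}`. -/
def Lspace {K Point : Type*} [Field K] (v : Point → K → ℤ) (A : Point →₀ ℤ) : Set K :=
  {f | f ≠ 0 ∧ ∀ P : Point, -(A P) ≤ v P f} ∪ {0}

/-- For a curve with function field `K` and order functions `v P` (multiplicative:
`v_P(fg) = v_P(f) + v_P(g)`), the set `Γ_P = {A : L(A) ≠ L(A-P)}` of divisor classes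
with no base point at `P` is a semigroup: if `A, B ∈ Γ_P` then `A + B ∈ Γ_P`. -/
theorem gammaP_semigroup {K Point : Type*} [Field K] (v : Point → K → ℤ)
    (hv : ∀ (P : Point) (f g : K), f ≠ 0 → g ≠ 0 → v P (f * g) = v P f + v P g)
    (P : Point) (A B : Point →₀ ℤ)
    (hA : Lspace v A ≠ Lspace v (A - Finsupp.single P 1))
    (hB : Lspace v B ≠ Lspace v (B - Finsupp.single P 1)) :
    Lspace v (A + B) ≠ Lspace v (A + B - Finsupp.single P 1) := by
  classical
  have hsingle : ∀ Q : Point, (0:ℤ) ≤ Finsupp.single P 1 Q := by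
    intro Q
    rcases eq_or_ne Q P with h | h <;> simp [Finsupp.single_apply, h.symm]
  have hsub : ∀ C : Point →₀ ℤ, Lspace v (C - Finsupp.single P 1) ⊆ Lspace v C := by
    intro C f hf
    rcases hf with ⟨hf0, hf⟩ | hf
    · refine Or.inl ⟨hf0, fun Q => le_trans ?_ (hf Q)⟩
      have := hsingle Q
      simp only [Finsupp.sub_apply]
      omega
    · exact Or.inr hf
  have key : ∀ C : Point →₀ ℤ, Lspace v C ≠ Lspace v (C - Finsupp.single P 1) →
      ∃ f : K, f ≠ 0 ∧ (∀ Q, -(C Q) ≤ v Q f) ∧ v P f = -(C P) := by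
    intro C hC
    have hns : ¬ Lspace v C ⊆ Lspace v (C - Finsupp.single P 1) :=
      fun h => hC (le_antisymm h (hsub C))
    obtain ⟨f, hfC, hfn⟩ := Set.not_subset.mp hns
    have hf0 : f ≠ 0 := by
      rintro rfl; exact hfn (Or.inr rfl)
    have hfC' : ∀ Q, -(C Q) ≤ v Q f := by
      rcases hfC with ⟨_, h⟩ | h
      · exact h
      · exact absurd h hf0
    refine ⟨f, hf0, hfC', ?_⟩
    by_contra hne
    apply hfn
    refine Or.inl ⟨hf0, fun Q => ?_⟩
    simp only [Finsupp.sub_apply]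
    rcases eq_or_ne Q P with rfl | hQP
    · have h1 := hfC' Q
      simp only [Finsupp.single_apply, if_pos rfl]
      omega
    · have h1 := hfC' Q
      simp only [Finsupp.single_apply, if_neg (Ne.symm hQP)]
      omega
  obtain ⟨f, hf0, hfA, hfP⟩ := key A hA
  obtain ⟨g, hg0, hgB, hgP⟩ := key B hB
  intro heq
  have hmem : f * g ∈ Lspace v (A + B) := by
    refine Or.inl ⟨mul_ne_zero hf0 hg0, fun Q => ?_⟩
    rw [hv Q f g hf0 hg0]
    have h1 := hfA Q
    have h2 := hgB Q
    simp only [Finsupp.add_apply]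
    omega
  rw [heq] at hmem
  rcases hmem with ⟨_, h⟩ | h
  · have := h P
    rw [hv P f g hf0 hg0] at this
    simp only [Finsupp.sub_apply, Finsupp.add_apply, Finsupp.single_apply, if_pos rfl,
      if_true] at this
    omega

  · exact mul_ne_zero hf0 hg0 h
end
end

section
/- For an effective divisor C, any set S', and any sequence {A_i}, the lower bound |Δ ∩ I'| + |Δ' ∩ I| - |Δ'| of the main order-bound theorem attains its maximum when S equals the set of base points of C; in particular, for every index i ∈ Δ' one has C ∉ Γ_{P_i}, i.e., P_i is a base point of C. -/
noncomputable section

variable {Point : Type*}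

/-! `Γ_P` is a semigroup, so `A ∉ Γ_P` and `A - C ∈ Γ_P` force `C ∉ Γ_P`: otherwise
`A = (A - C) + C ∈ Γ_P`. Hence every index of `Δ'` is a base point of `C`, the set
`Δ' ∩ I` is largest when `I` is the set of base points of `C`, and the bound only grows. -/

namespace GammaP

variable (X : Curve Point) (P : Point)

theorem add_mem {A B : Point →₀ ℤ} (hA : A ∈ GammaP X P) (hB : B ∈ GammaP X P) :
    A + B ∈ GammaP X P :=
  X.gamma_add P hA hB

theorem notMem_of_sub_mem {A C : Point →₀ ℤ} (hA : A ∉ GammaP X P)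
    (hAC : A - C ∈ GammaP X P) : C ∉ GammaP X P := fun hC =>
  hA (by simpa using add_mem X P hAC hC)

end GammaP

section Delta'

variable (X : Curve Point) (C : Point →₀ ℤ) (n : ℕ) (A : ℕ → Point →₀ ℤ) (P : ℕ → Point)

theorem notMem_gammaP_of_mem_delta' {i : ℕ} (hi : i ∈ Delta' X C n A P) :
    C ∉ GammaP X (P i) :=
  GammaP.notMem_of_sub_mem X (P i) hi.2.2.1 hi.2.2.2

theorem delta'_finite : (Delta' X C n A P).Finite :=
  (Set.finite_Icc 1 n).subset fun _ hi => ⟨hi.1, hi.2.1⟩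

theorem ncard_delta'_inter_le_ncard_delta'_inter_basePoints (I : Set ℕ) :
    (Delta' X C n A P ∩ I).ncard ≤ (Delta' X C n A P ∩ {i | C ∉ GammaP X (P i)}).ncard :=
  Set.ncard_le_ncard (fun _ hi => ⟨hi.1, notMem_gammaP_of_mem_delta' X C n A P hi.1⟩)
    ((delta'_finite X C n A P).inter_of_left _)

end Delta'

theorem optimal_S_base_points_general (X : Curve Point) (C : Point →₀ ℤ)
    (S' : Finset Point) (n : ℕ) (A : ℕ → Point →₀ ℤ) (P : ℕ → Point) :
    (∀ i ∈ Delta' X C n A P, C ∉ GammaP X (P i)) ∧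
    ∀ S : Finset Point,
      ((Delta X C n A P ∩ {i | P i ∈ S'}).ncard : ℤ)
          + ((Delta' X C n A P ∩ {i | P i ∈ S}).ncard : ℤ)
          - ((Delta' X C n A P).ncard : ℤ)
        ≤ ((Delta X C n A P ∩ {i | P i ∈ S'}).ncard : ℤ)
          + ((Delta' X C n A P ∩ {i | C ∉ GammaP X (P i)}).ncard : ℤ)
          - ((Delta' X C n A P).ncard : ℤ) := by
  refine ⟨fun i hi => notMem_gammaP_of_mem_delta' X C n A P hi, fun S => ?_⟩
  have := ncard_delta'_inter_le_ncard_delta'_inter_basePoints X C n A P {i | P i ∈ S}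
  omega

/-- For an effective divisor `C`, any set `S'`, and any sequence `{A_i}` with
`A_i = A_{i-1} + P_i`, the lower bound `|Δ ∩ I'| + |Δ' ∩ I| - |Δ'|` of the main
order-bound theorem attains its maximum when `S` equals the set of base points of `C`;
in particular for every `i ∈ Δ'` one has `C ∉ Γ_{P_i}`, i.e. `P_i` is a base point
of `C`. -/
theorem optimal_S_base_points (X : Curve Point) (C : Point →₀ ℤ) (hC : 0 ≤ C)
    (S' : Finset Point) (n : ℕ) (A : ℕ → Point →₀ ℤ) (P : ℕ → Point)
    (hA : ∀ i, 1 ≤ i → i ≤ n → A i = A (i - 1) + Finsupp.single (P i) 1) :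
    (∀ i ∈ Delta' X C n A P, C ∉ GammaP X (P i)) ∧
    ∀ S : Finset Point,
      ((Delta X C n A P ∩ {i | P i ∈ S'}).ncard : ℤ)
          + ((Delta' X C n A P ∩ {i | P i ∈ S}).ncard : ℤ)
          - ((Delta' X C n A P).ncard : ℤ)
        ≤ ((Delta X C n A P ∩ {i | P i ∈ S'}).ncard : ℤ)
          + ((Delta' X C n A P ∩ {i | C ∉ GammaP X (P i)}).ncard : ℤ)
          - ((Delta' X C n A P).ncard : ℤ) :=
  optimal_S_base_points_general X C S' n A P
end
end

section
/- (Equivalence of semigroup and sequence formulations) Let {γ*(C+λ; S, Q) : λ ∈ Λ', Q ∈ S'} be lower bounds for γ(C+λ; S, Q) satisfying γ*(C+λ+P; S, Q) >= γ*(C+λ; S, Q) whenever P ≠ Q. Then max over sequences Q_0,...,Q_r ∈ S' of min_{j} γ*(C + R_j; S, Q_j) equals min_{λ ∈ Λ'} max_{Q ∈ S'} γ*(C+λ; S, Q), where R_0 = 0 and R_j = R_{j-1} + Q_{j-1}. -/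
/-!
Let `λ₀ ∈ Λ'` attain the minimum `B` of `max_{Q ∈ S'} γ*(C + λ; S, Q)`.
Any sequence `Q_0, Q_1, …` must, within `deg λ₀ + 1` steps, reach an index `j` with
`R_j ≤ λ₀` and `R_j(Q_j) = λ₀(Q_j)`; since `λ₀ - R_j` avoids `Q_j`, monotonicity gives
`γ*(C + R_j; S, Q_j) ≤ γ*(C + λ₀; S, Q_j) ≤ B`. Conversely, the greedy sequence which always
picks `Q_j` maximising `γ*(C + R_j; S, ·)` has every term at least `B`, because `R_j ∈ Λ'`.
-/

noncomputable section

/-- `R_j = Q_0 + Q_1 + ... + Q_{j-1}`, the partial sums of a sequence of points,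
viewed as divisors. -/
def Rdiv {Point : Type*} (Q : ℕ → Point) (j : ℕ) : Point →₀ ℤ :=
  ∑ k ∈ Finset.range j, Finsupp.single (Q k) 1

namespace Finsupp

variable {σ R : Type*}

theorem degree_nonneg [AddCommMonoid R] [PartialOrder R] [IsOrderedAddMonoid R]
    {f : σ →₀ R} (hf : 0 ≤ f) : 0 ≤ degree f :=
  Finset.sum_nonneg fun i _ => hf i

theorem degree_le_degree [AddCommGroup R] [PartialOrder R] [IsOrderedAddMonoid R]
    {f g : σ →₀ R} (h : f ≤ g) : degree f ≤ degree g := by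
  simpa only [map_sub, sub_nonneg] using degree_nonneg (sub_nonneg.mpr h)

end Finsupp

section PartialSums

variable {Point : Type*} (Q : ℕ → Point)

@[simp]
theorem rdiv_zero : Rdiv Q 0 = 0 := by
  simp [Rdiv]

theorem rdiv_succ (j : ℕ) : Rdiv Q (j + 1) = Rdiv Q j + Finsupp.single (Q j) 1 := by
  simp [Rdiv, Finset.sum_range_succ]

@[simp]
theorem degree_rdiv (j : ℕ) : (Rdiv Q j).degree = j := by
  simp [Rdiv, map_sum]

theorem rdiv_nonneg (j : ℕ) : 0 ≤ Rdiv Q j :=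
  Finset.sum_nonneg fun _ _ => Finsupp.single_nonneg.mpr zero_le_one

theorem support_rdiv_subset {S : Finset Point} (hQ : ∀ k, Q k ∈ S) (j : ℕ) :
    (Rdiv Q j).support ⊆ S := by
  classical
  refine Finsupp.support_finsetSum.trans (Finset.biUnion_subset.mpr fun k _ => ?_)
  exact Finsupp.support_single_subset.trans (Finset.singleton_subset_iff.mpr (hQ k))

theorem exists_rdiv_le_apply_eq {lam : Point →₀ ℤ} (hlam : 0 ≤ lam) :
    ∃ j : ℕ, (j : ℤ) ≤ lam.degree ∧ Rdiv Q j ≤ lam ∧ Rdiv Q j (Q j) = lam (Q j) := by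
  classical
  have hbound : ∀ j, Rdiv Q j ≤ lam → (j : ℤ) ≤ lam.degree := fun j h =>
    degree_rdiv Q j ▸ Finsupp.degree_le_degree h
  -- take the last `j` with `R_j ≤ lam`; it exists because `deg R_j = j`
  have hexit : ∃ j, ¬Rdiv Q (j + 1) ≤ lam :=
    ⟨lam.degree.toNat, fun h => by have := hbound _ h; omega⟩
  have hnext := Nat.find_spec hexit
  have hfirst : ∀ i < Nat.find hexit, Rdiv Q (i + 1) ≤ lam := fun i hi =>
    not_not.mp (Nat.find_min hexit hi)
  generalize Nat.find hexit = j at hnext hfirst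
  have hle : Rdiv Q j ≤ lam := by
    rcases j with _ | i
    · simpa using hlam
    · exact hfirst i (Nat.lt_succ_self i)
  refine ⟨j, hbound j hle, hle, le_antisymm (hle (Q j)) (not_lt.mp fun hlt => ?_)⟩
  refine hnext fun x => ?_
  rw [rdiv_succ, Finsupp.add_apply, Finsupp.single_apply]
  split_ifs with hx
  · subst hx; omega
  · simpa using hle x

end PartialSums

/-- The partial sums `R_j` of the sequence `Q_j = pick R_j`; with `pick` an argmax this is the
greedy sequence. -/
def greedyDivisor {Point : Type*} (pick : (Point →₀ ℤ) → Point) : ℕ → Point →₀ ℤ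
  | 0 => 0
  | j + 1 => greedyDivisor pick j + Finsupp.single (pick (greedyDivisor pick j)) 1

theorem rdiv_greedyDivisor {Point : Type*} (pick : (Point →₀ ℤ) → Point) (j : ℕ) :
    Rdiv (fun k => pick (greedyDivisor pick k)) j = greedyDivisor pick j := by
  induction j with
  | zero => simp [greedyDivisor]
  | succ j ih => rw [rdiv_succ, ih, greedyDivisor]

def MonotoneInOtherPoints {Point α : Type*} [Preorder α] (g : (Point →₀ ℤ) → Point → α) :
    Prop :=
  ∀ (D : Point →₀ ℤ) (P Q : Point), P ≠ Q → g D Q ≤ g (D + Finsupp.single P 1) Q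

namespace MonotoneInOtherPoints

variable {Point α : Type*} [Preorder α] {g : (Point →₀ ℤ) → Point → α}

theorem add_left (hg : MonotoneInOtherPoints g) (C : Point →₀ ℤ) :
    MonotoneInOtherPoints fun D => g (C + D) := fun D P Q hPQ => by
  simpa only [add_assoc] using hg (C + D) P Q hPQ

theorem le_add (hg : MonotoneInOtherPoints g) {Q : Point} {μ : Point →₀ ℤ} (hμ : 0 ≤ μ)
    (hμQ : μ Q = 0) (D : Point →₀ ℤ) : g D Q ≤ g (D + μ) Q := by
  -- the divisors along which `g · Q` is monotone form a submonoid, and `μ` is a sum of `P ≠ Q`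
  let M : AddSubmonoid (Point →₀ ℤ) :=
    { carrier := {x | ∀ D, g D Q ≤ g (D + x) Q}
      zero_mem' := fun D => by simp
      add_mem' := fun {x y} hx hy D => (hx D).trans (by simpa only [add_assoc] using hy (D + x)) }
  have hsingle : ∀ P ∈ μ.support, Finsupp.single P 1 ∈ M := fun P hP D =>
    hg D P Q (by rintro rfl; exact Finsupp.mem_support_iff.mp hP hμQ)
  suffices μ ∈ M from this D
  rw [← Finsupp.sum_single μ]
  refine AddSubmonoid.sum_mem M fun P hP => ?_
  have hsmul : (μ P).toNat • Finsupp.single P (1 : ℤ) = Finsupp.single P (μ P) := by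
    rw [Finsupp.smul_single, nsmul_one, Int.toNat_of_nonneg (hμ P)]
  exact hsmul ▸ AddSubmonoid.nsmul_mem M (hsingle P hP) _

end MonotoneInOtherPoints

section Bounds

variable {Point α : Type*} [LinearOrder α] {S : Finset Point} (hS : S.Nonempty)

theorem inf'_rdiv_le_sup' {g : (Point →₀ ℤ) → Point → α} (hg : MonotoneInOtherPoints g)
    {lam : Point →₀ ℤ} (hlam : 0 ≤ lam) {Q : ℕ → Point} (hQ : ∀ j, Q j ∈ S) {r : ℕ}
    (hr : lam.degree ≤ r) :
    (Finset.range (r + 1)).inf' Finset.nonempty_range_add_one (fun j => g (Rdiv Q j) (Q j))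
      ≤ S.sup' hS (g lam) := by
  obtain ⟨j, hj, hle, heq⟩ := exists_rdiv_le_apply_eq Q hlam
  calc _ ≤ g (Rdiv Q j) (Q j) := Finset.inf'_le _ (Finset.mem_range.mpr (by omega))
    _ ≤ g (Rdiv Q j + (lam - Rdiv Q j)) (Q j) :=
        hg.le_add (sub_nonneg.mpr hle) (by simp [heq]) _
    _ = g lam (Q j) := by rw [add_sub_cancel]
    _ ≤ S.sup' hS (g lam) := Finset.le_sup' _ (hQ j)

theorem exists_seq_forall_le_apply_rdiv (g : (Point →₀ ℤ) → Point → α) {B : α}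
    (hB : ∀ lam : Point →₀ ℤ, 0 ≤ lam → lam.support ⊆ S → B ≤ S.sup' hS (g lam)) :
    ∃ Q : ℕ → Point, (∀ j, Q j ∈ S) ∧ ∀ j, B ≤ g (Rdiv Q j) (Q j) := by
  choose pick hpick hmax using fun lam : Point →₀ ℤ => S.exists_mem_eq_sup' hS (g lam)
  refine ⟨fun k => pick (greedyDivisor pick k), fun j => hpick _, fun j => ?_⟩
  have hQ : ∀ k, pick (greedyDivisor pick k) ∈ S := fun k => hpick _
  simpa only [rdiv_greedyDivisor, ← hmax] using
    hB _ (rdiv_nonneg _ j) (support_rdiv_subset _ hQ j)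

end Bounds

/-- (Equivalence of the semigroup and sequence formulations of the order bound)
Let `γ*(C+λ; S, Q)` (`λ ∈ Λ'`, `Q ∈ S'`) be lower bounds for `γ(C+λ; S, Q)` satisfying
the monotonicity `γ*(C+λ+P; S, Q) ≥ γ*(C+λ; S, Q)` whenever `P ≠ Q`, where `Λ'` is the
semigroup (with `0`) generated by the points of `S'`.  Then, for all long enough
sequences, the maximum over sequences `Q_0, ..., Q_r ∈ S'` of
`min_j γ*(C + R_j; S, Q_j)` equals `min_{λ ∈ Λ'} max_{Q ∈ S'} γ*(C+λ; S, Q)`,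
where `R_0 = 0` and `R_j = R_{j-1} + Q_{j-1}`. -/
theorem sequence_eq_semigroup_bound {Point : Type*} (S' : Finset Point)
    (hS' : S'.Nonempty) (C : Point →₀ ℤ)
    (gstar : (Point →₀ ℤ) → Point → ℤ)
    (hmono : ∀ (D : Point →₀ ℤ) (P Q : Point), P ≠ Q →
      gstar D Q ≤ gstar (D + Finsupp.single P 1) Q)
    (hbdd : BddBelow {m : ℤ | ∃ lam : Point →₀ ℤ, 0 ≤ lam ∧ lam.support ⊆ S' ∧
      m = S'.sup' hS' fun Q => gstar (C + lam) Q}) :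
    ∃ r0 : ℕ, ∀ r ≥ r0,
      sSup {m : ℤ | ∃ Q : ℕ → Point, (∀ j, Q j ∈ S') ∧
          m = (Finset.range (r + 1)).inf' ⟨0, Finset.mem_range.mpr (Nat.succ_pos r)⟩
                fun j => gstar (C + Rdiv Q j) (Q j)}
        = sInf {m : ℤ | ∃ lam : Point →₀ ℤ, 0 ≤ lam ∧ lam.support ⊆ S' ∧
            m = S'.sup' hS' fun Q => gstar (C + lam) Q} := by
  have hg : MonotoneInOtherPoints fun D => gstar (C + D) :=
    MonotoneInOtherPoints.add_left hmono C
  obtain ⟨lam₀, hlam₀, -, hmin⟩ := Int.csInf_mem (by exact ⟨_, 0, le_rfl, by simp, rfl⟩) hbdd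
  refine ⟨lam₀.degree.toNat, fun r hr => ?_⟩
  have hub := fun (Q : ℕ → Point) (hQS : ∀ j, Q j ∈ S') =>
    (inf'_rdiv_le_sup' hS' hg hlam₀ hQS (r := r) (by omega)).trans_eq hmin.symm
  refine IsGreatest.csSup_eq ⟨?_, ?_⟩
  · obtain ⟨Q, hQS, hQ⟩ := exists_seq_forall_le_apply_rdiv hS' (fun D => gstar (C + D))
      fun lam h0 hsupp => csInf_le hbdd ⟨lam, h0, hsupp, rfl⟩
    exact ⟨Q, hQS, le_antisymm (Finset.le_inf' _ _ fun j _ => hQ j) (hub Q hQS)⟩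
  · rintro m ⟨Q, hQS, rfl⟩
    exact hub Q hQS
end
end
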